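/- Let M1 = [[1,0,0,0],[0,1,0,1],[0,0,1,0],[0,0,0,1]] and τ = [[τ0,1,0,0],[1,0,0,0],[τ1,τ3,1,0],[τ2,-τ0τ3+τ1,-τ0,1]] with τ2+1 ≠ 0 and τ0²τ3 - τ0τ1 + τ2 + 1 ≠ 0. Then M1·τ = τ'·g, where τ' is the normalized matrix with parameters τ0' = τ0/(τ2+1), τ1' = τ1/(τ2+1), τ2' = τ2/(τ2+1), τ3' = (τ0τ1τ3 - τ1² + τ2τ3 + τ3)/(τ0²τ3 - τ0τ1 + τ2 + 1), and g is the upper triangular matrix [[τ2+1, -τ0τ3+τ1, -τ0, 1],[0, (τ0²τ3-τ0τ1+τ2+1)/(τ2+1), τ0²/(τ2+1), -τ0/(τ2+1)],[0,0,(τ2+1)/(τ0²τ3-τ0τ1+τ2+1), (τ0τ3-τ1)/(τ0²τ3-τ0τ1+τ2+1)],[0,0,0,1/(τ2+1)]]. -/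

import Mathlib

open Matrix

def M1 : Matrix (Fin 4) (Fin 4) ℂ :=
  !![1,0,0,0; 0,1,0,1; 0,0,1,0; 0,0,0,1]

/-- The normalized form of a period matrix with parameters (a,b,c,d). -/
def N (a b c d : ℂ) : Matrix (Fin 4) (Fin 4) ℂ :=
  !![a, 1, 0, 0;
     1, 0, 0, 0;
     b, d, 1, 0;
     c, -a*d+b, -a, 1]

/-! The second row of a normalized matrix is the first unit vector, so the second row of
`N a' b' c' d' * g` is the first row of `g`; this forces the first row of `g` to be the second
row of `M1 * N τ0 τ1 τ2 τ3`, and the remaining entries are then solved for triangularly. -/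

lemma M1_mul_N (a b c d : ℂ) :
    M1 * N a b c d =
      !![a, 1, 0, 0;
         c + 1, -a*d+b, -a, 1;
         b, d, 1, 0;
         c, -a*d+b, -a, 1] := by
  ext i j
  fin_cases i <;> fin_cases j <;>
    simp [M1, N, mul_apply, Fin.sum_univ_four, add_comm]

lemma N_mul_upperTriangular (a b c d p q r s t u v w x y : ℂ) :
    N a b c d * !![p, q, r, s; 0, t, u, v; 0, 0, w, x; 0, 0, 0, y] =
      !![a*p, a*q + t, a*r + u, a*s + v;
         p, q, r, s;
         b*p, b*q + d*t, b*r + d*u + w, b*s + d*v + x;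
         c*p, c*q + (-a*d+b)*t, c*r + (-a*d+b)*u - a*w, c*s + (-a*d+b)*v - a*x + y] := by
  ext i j
  fin_cases i <;> fin_cases j <;>
    simp [N, mul_apply, Fin.sum_univ_four] <;> ring

theorem stmt12 (τ0 τ1 τ2 τ3 : ℂ) (h1 : τ2 + 1 ≠ 0)
    (h2 : τ0^2*τ3 - τ0*τ1 + τ2 + 1 ≠ 0) :
    M1 * N τ0 τ1 τ2 τ3 =
      N (τ0/(τ2+1)) (τ1/(τ2+1)) (τ2/(τ2+1))
        ((τ0*τ1*τ3 - τ1^2 + τ2*τ3 + τ3)/(τ0^2*τ3 - τ0*τ1 + τ2 + 1)) *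
      !![τ2+1, -τ0*τ3+τ1, -τ0, 1;
         0, (τ0^2*τ3-τ0*τ1+τ2+1)/(τ2+1), τ0^2/(τ2+1), -τ0/(τ2+1);
         0, 0, (τ2+1)/(τ0^2*τ3-τ0*τ1+τ2+1), (τ0*τ3-τ1)/(τ0^2*τ3-τ0*τ1+τ2+1);
         0, 0, 0, 1/(τ2+1)] := by
  rw [M1_mul_N, N_mul_upperTriangular]
  -- Keep the denominators opaque, or `simp` reorders them and `field_simp` loses `h1`, `h2`.
  set A := τ2 + 1 with hA
  set B := τ0^2*τ3 - τ0*τ1 + τ2 + 1 with hB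
  clear_value A B
  ext i j
  fin_cases i <;> fin_cases j <;> simp <;> field_simp <;> subst A B <;> ring
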